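/- (Dirichlet-type integral over the ordered simplex) For β ∈ (0,1) and α = 1−β, ∫_{S(n)} (1−s_1)^{−α} (s_1−s_2)^{−α} ⋯ (s_{n−1}−s_n)^{−α} ds = Γ(β)^n / Γ(1 + nβ), where S(n) = {0 < s_n < ... < s_1 < 1}. -/

import Mathlib

/-! Integrate out the largest coordinate first. Writing `s = (x, y)` with `y` in the
`n`-point simplex, `∫_{y₀}^1 (1 - x)^{γ-1} (x - y₀)^{β-1} dx = B(γ, β) (1 - y₀)^{γ+β-1}`, so the
integral over the `(n+1)`-point simplex with exponent `γ - 1` on the top gap `1 - s₀` is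
`B(γ, β)` times the `n`-point integral with exponent `γ + β - 1`. The Beta factors telescope to
`Γ(γ) Γ(β)^n / Γ(γ + nβ + 1)`, and the theorem is the case `γ = β`. -/

open MeasureTheory Set Real ProbabilityTheory

open scoped ENNReal

theorem integral_rpow_mul_one_sub_rpow {p q : ℝ} (hp : 0 < p) (hq : 0 < q) :
    ∫ x in (0 : ℝ)..1, x ^ (p - 1) * (1 - x) ^ (q - 1) = beta p q := by
  have hcast : ((∫ x in (0 : ℝ)..1, x ^ (p - 1) * (1 - x) ^ (q - 1) : ℝ) : ℂ)
      = Complex.betaIntegral p q := by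
    rw [← intervalIntegral.integral_ofReal]
    refine intervalIntegral.integral_congr fun x hx => ?_
    rw [uIcc_of_le zero_le_one] at hx
    push_cast [Complex.ofReal_cpow hx.1, Complex.ofReal_cpow (sub_nonneg.2 hx.2)]
    rfl
  rw [beta_eq_betaIntegralReal p q hp hq, ← hcast, Complex.ofReal_re]

theorem ProbabilityTheory.beta_comm (p q : ℝ) : beta p q = beta q p := by
  rw [beta, beta, mul_comm, add_comm]

theorem integral_sub_rpow_mul_rpow_sub {a b p q : ℝ} (hab : a < b) (hp : 0 < p) (hq : 0 < q) :
    ∫ x in a..b, (b - x) ^ (p - 1) * (x - a) ^ (q - 1) = (b - a) ^ (p + q - 1) * beta p q := by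
  have hba : 0 < b - a := sub_pos.2 hab
  have hsub := intervalIntegral.integral_comp_mul_add
    (fun x => (b - x) ^ (p - 1) * (x - a) ^ (q - 1)) hba.ne' a (a := 0) (b := 1)
  have hscale : ∀ x ∈ uIcc (0 : ℝ) 1,
      (b - ((b - a) * x + a)) ^ (p - 1) * ((b - a) * x + a - a) ^ (q - 1)
        = (b - a) ^ (p + q - 2) * (x ^ (q - 1) * (1 - x) ^ (p - 1)) := by
    intro x hx
    rw [uIcc_of_le zero_le_one] at hx
    rw [show b - ((b - a) * x + a) = (b - a) * (1 - x) by ring, add_sub_cancel_right,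
      mul_rpow hba.le (sub_nonneg.2 hx.2), mul_rpow hba.le hx.1,
      show p + q - 2 = (p - 1) + (q - 1) by ring, rpow_add hba]
    ring
  rw [intervalIntegral.integral_congr hscale, intervalIntegral.integral_const_mul,
    integral_rpow_mul_one_sub_rpow hq hp, beta_comm, mul_zero, zero_add, mul_one, smul_eq_mul,
    sub_add_cancel, eq_inv_mul_iff_mul_eq₀ hba.ne'] at hsub
  rw [← hsub, show p + q - 1 = (p + q - 2) + 1 by ring, rpow_add_one hba.ne']
  ring

theorem setLIntegral_Ioo_sub_rpow_mul_rpow_sub {a b p q : ℝ} (hab : a < b) (hp : 0 < p)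
    (hq : 0 < q) :
    ∫⁻ x in Ioo a b, ENNReal.ofReal ((b - x) ^ (p - 1) * (x - a) ^ (q - 1))
      = ENNReal.ofReal ((b - a) ^ (p + q - 1) * beta p q) := by
  have hI := integral_sub_rpow_mul_rpow_sub hab hp hq
  have hint : IntegrableOn (fun x => (b - x) ^ (p - 1) * (x - a) ^ (q - 1)) (Ioo a b) :=
    (intervalIntegral.intervalIntegrable_of_integral_ne_zero (by
      rw [hI]; exact (mul_pos (rpow_pos_of_pos (sub_pos.2 hab) _) (beta_pos hp hq)).ne')).1
      |>.mono_set Ioo_subset_Ioc_self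
  rw [← ofReal_integral_eq_lintegral_ofReal hint, integral_Ioc_eq_integral_Ioo.symm,
    ← intervalIntegral.integral_of_le hab.le, hI]
  exact ae_restrict_of_forall_mem measurableSet_Ioo fun x hx =>
    mul_nonneg (rpow_nonneg (sub_nonneg.2 hx.2.le) _) (rpow_nonneg (sub_nonneg.2 hx.1.le) _)

theorem lintegral_fin_cons {α : Type*} [MeasureSpace α] [SigmaFinite (volume : Measure α)]
    {n : ℕ} {f : (Fin (n + 1) → α) → ℝ≥0∞} (hf : Measurable f) :
    ∫⁻ s, f s = ∫⁻ y, ∫⁻ x, f (Fin.cons x y) := by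
  set e := MeasurableEquiv.piFinSuccAbove (fun _ : Fin (n + 1) => α) 0
  rw [← (volume_preserving_piFinSuccAbove (fun _ : Fin (n + 1) => α) 0).symm.lintegral_comp hf,
    Measure.volume_eq_prod, lintegral_prod_symm (fun z => f (e.symm z))
      (hf.comp e.symm.measurable).aemeasurable]
  simp only [e, MeasurableEquiv.piFinSuccAbove_symm_apply, Fin.insertNthEquiv, Equiv.coe_fn_mk,
    Fin.insertNth_zero']

/-- Coordinates are indexed from `0`, so `s 0` is the largest one, the paper's `s_1`. -/
def orderedSimplex (n : ℕ) : Set (Fin (n + 1) → ℝ) :=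
  {s | StrictAnti s ∧ ∀ i, s i ∈ Ioo (0 : ℝ) 1}

theorem measurableSet_orderedSimplex (n : ℕ) : MeasurableSet (orderedSimplex n) := by
  have h : orderedSimplex n = (⋂ i : Fin n, {s | s i.succ < s i.castSucc}) ∩
      ⋂ i, (fun s => s i) ⁻¹' Ioo 0 1 := by
    ext s
    simp [orderedSimplex, Fin.strictAnti_iff_succ_lt]
  rw [h]
  refine .inter (.iInter fun i => ?_) (.iInter fun i => ?_)
  · exact measurableSet_lt (measurable_pi_apply _) (measurable_pi_apply _)
  · exact measurable_pi_apply i measurableSet_Ioo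

theorem cons_mem_orderedSimplex_iff {n : ℕ} {x : ℝ} {y : Fin (n + 1) → ℝ} :
    (Fin.cons x y : Fin (n + 2) → ℝ) ∈ orderedSimplex (n + 1) ↔
      y ∈ orderedSimplex n ∧ x ∈ Ioo (y 0) 1 := by
  simp only [orderedSimplex, mem_ofPred_eq, Fin.strictAnti_iff_succ_lt, Fin.forall_fin_succ,
    Fin.cons_zero, Fin.cons_succ, Fin.castSucc_zero, ← Fin.succ_castSucc]
  constructor
  · rintro ⟨⟨h0, hy⟩, hx, hy0, hy'⟩
    exact ⟨⟨hy, hy0, hy'⟩, h0, hx.2⟩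
  · rintro ⟨⟨hy, hy0, hy'⟩, h0, hx1⟩
    exact ⟨⟨h0, hy⟩, ⟨hy0.1.trans h0, hx1⟩, hy0, hy'⟩

theorem setLIntegral_orderedSimplex_succ {n : ℕ} {f : (Fin (n + 2) → ℝ) → ℝ≥0∞}
    (hf : Measurable f) :
    ∫⁻ s in orderedSimplex (n + 1), f s
      = ∫⁻ y in orderedSimplex n, ∫⁻ x in Ioo (y 0) 1, f (Fin.cons x y) := by
  rw [← lintegral_indicator (measurableSet_orderedSimplex _),
    lintegral_fin_cons (hf.indicator (measurableSet_orderedSimplex _)),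
    ← lintegral_indicator (measurableSet_orderedSimplex _)]
  classical
  congr 1 with y
  by_cases hy : y ∈ orderedSimplex n
  · rw [indicator_of_mem hy, ← lintegral_indicator measurableSet_Ioo]
    congr 1 with x
    simp only [indicator_apply, cons_mem_orderedSimplex_iff, hy, true_and]
  · simp [cons_mem_orderedSimplex_iff, hy]

noncomputable def gapWeight (β : ℝ) {n : ℕ} (s : Fin (n + 1) → ℝ) : ℝ :=
  ∏ i : Fin n, (s i.castSucc - s i.succ) ^ (β - 1)

theorem gapWeight_cons (β x : ℝ) {n : ℕ} (y : Fin (n + 1) → ℝ) :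
    gapWeight β (Fin.cons x y : Fin (n + 2) → ℝ) = (x - y 0) ^ (β - 1) * gapWeight β y := by
  simp only [gapWeight, Fin.prod_univ_succ, Fin.cons_zero, Fin.castSucc_zero, Fin.cons_succ,
    ← Fin.succ_castSucc]

theorem gapWeight_nonneg (β : ℝ) {n : ℕ} {s : Fin (n + 1) → ℝ} (hs : s ∈ orderedSimplex n) :
    0 ≤ gapWeight β s :=
  Finset.prod_nonneg fun i _ => rpow_nonneg (sub_nonneg.2 (hs.1 i.castSucc_lt_succ).le) _

theorem orderedSimplex_zero :
    orderedSimplex 0 = MeasurableEquiv.funUnique (Fin 1) ℝ ⁻¹' Ioo 0 1 := by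
  ext s
  simp [orderedSimplex, Fin.strictAnti_iff_succ_lt, Fin.forall_fin_one]

theorem lintegral_orderedSimplex {β : ℝ} (hβ : 0 < β) (n : ℕ) {γ : ℝ} (hγ : 0 < γ) :
    ∫⁻ s in orderedSimplex n, ENNReal.ofReal ((1 - s 0) ^ (γ - 1) * gapWeight β s)
      = ENNReal.ofReal (Gamma γ * Gamma β ^ n / Gamma (γ + n * β + 1)) := by
  induction n generalizing γ with
  | zero =>
    have hbeta := setLIntegral_Ioo_sub_rpow_mul_rpow_sub zero_lt_one hγ zero_lt_one
    simp only [sub_self, rpow_zero, mul_one, sub_zero, one_rpow, one_mul] at hbeta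
    simp only [gapWeight, Finset.univ_eq_empty, Finset.prod_empty, mul_one, orderedSimplex_zero]
    refine ((volume_preserving_funUnique (Fin 1) ℝ).setLIntegral_comp_preimage_emb
      (MeasurableEquiv.measurableEmbedding _)
      (fun x => ENNReal.ofReal ((1 - x) ^ (γ - 1))) _).trans ?_
    simp [hbeta, beta, Gamma_one]
  | succ n ih =>
    have hinner : ∀ y ∈ orderedSimplex n,
        ∫⁻ x in Ioo (y 0) 1, ENNReal.ofReal ((1 - x) ^ (γ - 1) *
            gapWeight β (Fin.cons x y : Fin (n + 2) → ℝ))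
          = ENNReal.ofReal (beta γ β) *
            ENNReal.ofReal ((1 - y 0) ^ (γ + β - 1) * gapWeight β y) := by
      intro y hy
      have hP := gapWeight_nonneg β hy
      simp_rw [gapWeight_cons, ← mul_assoc, ENNReal.ofReal_mul' hP]
      rw [lintegral_mul_const' _ _ ENNReal.ofReal_ne_top,
        setLIntegral_Ioo_sub_rpow_mul_rpow_sub (hy.2 0).2 hγ hβ, mul_comm _ (beta γ β),
        ENNReal.ofReal_mul (beta_pos hγ hβ).le, mul_assoc]
    have hmeas : Measurable fun s : Fin (n + 2) → ℝ =>
        ENNReal.ofReal ((1 - s 0) ^ (γ - 1) * gapWeight β s) := by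
      unfold gapWeight
      fun_prop
    rw [setLIntegral_orderedSimplex_succ hmeas]
    simp only [Fin.cons_zero]
    rw [setLIntegral_congr_fun (measurableSet_orderedSimplex n) hinner,
      lintegral_const_mul' _ _ ENNReal.ofReal_ne_top, ih (add_pos hγ hβ),
      ← ENNReal.ofReal_mul (beta_pos hγ hβ).le]
    have hΓ : Gamma (γ + β) ≠ 0 := (Gamma_pos_of_pos (add_pos hγ hβ)).ne'
    rw [show γ + (n + 1 : ℕ) * β + 1 = γ + β + n * β + 1 by push_cast; ring, beta]
    congr 1
    field_simp
    ring

theorem integral_orderedSimplex {β : ℝ} (hβ : 0 < β) (n : ℕ) {γ : ℝ} (hγ : 0 < γ) :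
    ∫ s in orderedSimplex n, (1 - s 0) ^ (γ - 1) * gapWeight β s
      = Gamma γ * Gamma β ^ n / Gamma (γ + n * β + 1) := by
  have hmeas : Measurable fun s : Fin (n + 1) → ℝ => (1 - s 0) ^ (γ - 1) * gapWeight β s := by
    unfold gapWeight
    fun_prop
  have hnonneg : ∀ s ∈ orderedSimplex n, 0 ≤ (1 - s 0) ^ (γ - 1) * gapWeight β s := fun s hs =>
    mul_nonneg (rpow_nonneg (sub_nonneg.2 (hs.2 0).2.le) _) (gapWeight_nonneg β hs)
  rw [integral_eq_lintegral_of_nonneg_ae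
      (ae_restrict_of_forall_mem (measurableSet_orderedSimplex n) hnonneg)
      hmeas.aestronglyMeasurable, lintegral_orderedSimplex hβ n hγ, ENNReal.toReal_ofReal]
  have := Gamma_pos_of_pos hγ
  positivity

/-- Dirichlet-type integral over the ordered simplex: for `β ∈ (0,1)`, `α = 1-β`,
`∫_{S(n)} (1-s_1)^{-α}(s_1-s_2)^{-α}⋯(s_{n-1}-s_n)^{-α} ds = Γ(β)^n / Γ(1+nβ)`. -/
theorem dirichlet_simplex_integral (n : ℕ) (β : ℝ) (hβ : β ∈ Set.Ioo (0 : ℝ) 1) :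
    (∫ s in {s : Fin (n + 1) → ℝ | StrictAnti s ∧ ∀ i, s i ∈ Set.Ioo (0 : ℝ) 1},
        ∏ i : Fin (n + 1),
          ((if h : (i : ℕ) = 0 then 1
            else s ⟨(i : ℕ) - 1, by have := i.isLt; omega⟩) - s i) ^ (-(1 - β)))
      = Real.Gamma β ^ (n + 1) / Real.Gamma (1 + (n + 1) * β) := by
  have hintegrand : ∀ s : Fin (n + 1) → ℝ,
      ∏ i : Fin (n + 1), ((if h : (i : ℕ) = 0 then 1
          else s ⟨(i : ℕ) - 1, by have := i.isLt; omega⟩) - s i) ^ (-(1 - β))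
        = (1 - s 0) ^ (β - 1) * gapWeight β s := by
    intro s
    rw [neg_sub, Fin.prod_univ_succ]
    rfl
  simp_rw [hintegrand]
  rw [← orderedSimplex, integral_orderedSimplex hβ.1 n hβ.1, pow_succ']
  congr 2
  ring
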